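/- arXiv:1801.00406 — 3 statements merged into one kernel-verified Lean document; each statement's English description precedes it below -/
import Mathlib

section
/- Let F be a field and let K, D, U be integers with 0 ≤ U ≤ D and U + D ≤ K − 2. Set a = gcd(K, D−U, U+1), u_a = (U+1)/a, K_a = K/a, Δ_a = (D−U)/a, N = K_a − Δ_a. Let L be a K_a × N matrix over F with rows L_s indexed by s ∈ ℤ/K_aℤ such that for every s ∈ ℤ/K_aℤ there exist a vector w ∈ F^N and scalars b_1,…,b_{Δ_a} ∈ F with L·w = e_s + Σ_{t=1}^{Δ_a} b_t·e_{s+t}. Then the vector linear index code c(x) = Σ_{s ∈ ℤ/K_aℤ} y_s(x)·L_s is decodable: for all message assignments x, x' : ℤ/Kℤ → F^{u_a} and every k ∈ ℤ/Kℤ, if c(x) = c(x') and x_m = x'_m for every m ∈ 𝒦_k = {k−U,…,k−1} ∪ {k+1,…,k+D}, then x_k = x'_k. -/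
/-- `ι : ℤ/K_aℤ → ℤ/Kℤ`, `ι(t) = a·t` (well defined since `a ∣ K`). -/
def iotaMap (K Ka a : ℕ) (t : ZMod Ka) : ZMod K := ((a * t.val : ℕ) : ZMod K)

/-- `y_s(x) = Σ_{i=1}^{u_a} Σ_{j=0}^{a−1} x_{ι(s+1−i)+j, i}`, where `i : Fin ua`
stands for the index `i+1 ∈ {1,…,u_a}` (so `s + 1 - (i+1) = s - i`). -/
def ySym {F : Type*} [Field F] (K Ka a ua : ℕ) (x : ZMod K → Fin ua → F)
    (s : ZMod Ka) : F :=
  ∑ i : Fin ua, ∑ j : Fin a,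
    x (iotaMap K Ka a (s - (i.1 : ZMod Ka)) + (j.1 : ZMod K)) i

private lemma div_unique_aux (a x y j j' : ℕ) (hj : j < a) (hj' : j' < a)
    (h : a * x + j = a * y + j') : x = y ∧ j = j' := by
  have hx : (a * x + j) / a = x := by rw [Nat.mul_add_div (by omega)]; simp [Nat.div_eq_of_lt hj]
  have hy : (a * y + j') / a = y := by rw [Nat.mul_add_div (by omega)]; simp [Nat.div_eq_of_lt hj']
  have hxy : x = y := by rw [← hx, ← hy, h]
  subst hxy; omega

/-- Theorem 1 (decodability): the vector linear index code
`c(x) = Σ_s y_s(x) · L_s` built from a matrix `L` with the AIR property lets every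
receiver `R_k` recover its wanted message vector `x_k` from the codeword and its
side-information `𝒦_k = {k−U,…,k−1} ∪ {k+1,…,k+D}`. -/
theorem suicp_sncs_vector_linear_code_decodable
    (F : Type*) [Field F] (K D U : ℕ) (hUD : U ≤ D) (hK : U + D + 2 ≤ K)
    (a ua Ka Δa N : ℕ)
    (ha : a = Nat.gcd K (Nat.gcd (D - U) (U + 1)))
    (hua : ua = (U + 1) / a) (hKa : Ka = K / a) (hΔa : Δa = (D - U) / a)
    (hN : N = Ka - Δa)
    [NeZero K] [NeZero Ka]
    (L : Matrix (ZMod Ka) (Fin N) F)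
    (hAIR : ∀ s : ZMod Ka, ∃ (w : Fin N → F) (b : Fin Δa → F),
      L.mulVec w =
        (Pi.single s 1 : ZMod Ka → F) +
          ∑ t : Fin Δa,
            b t • (Pi.single (s + ((t.1 + 1 : ℕ) : ZMod Ka)) 1 : ZMod Ka → F))
    (x x' : ZMod K → Fin ua → F) (k : ZMod K)
    (hcode : ∑ s : ZMod Ka, ySym K Ka a ua x s • L s
           = ∑ s : ZMod Ka, ySym K Ka a ua x' s • L s)
    (hback : ∀ d : ℕ, 1 ≤ d → d ≤ U → x (k - (d : ZMod K)) = x' (k - (d : ZMod K)))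
    (hfwd : ∀ d : ℕ, 1 ≤ d → d ≤ D → x (k + (d : ZMod K)) = x' (k + (d : ZMod K))) :
    x k = x' k := by
  -- Basic arithmetic facts about `a`.
  have hgpos : 0 < Nat.gcd (D - U) (U + 1) := Nat.gcd_pos_of_pos_right _ (Nat.succ_pos U)
  have hapos : 0 < a := ha ▸ Nat.gcd_pos_of_pos_right _ hgpos
  have hdK : a ∣ K := ha ▸ Nat.gcd_dvd_left _ _
  have hdU : a ∣ U + 1 :=
    ha ▸ dvd_trans (Nat.gcd_dvd_right K _) (Nat.gcd_dvd_right _ _)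
  have hdΔ : a ∣ D - U :=
    ha ▸ dvd_trans (Nat.gcd_dvd_right K _) (Nat.gcd_dvd_left _ _)
  have haK : a * Ka = K := by rw [hKa]; exact Nat.mul_div_cancel' hdK
  have haU : a * ua = U + 1 := by rw [hua]; exact Nat.mul_div_cancel' hdU
  have haΔ : a * Δa = D - U := by rw [hΔa]; exact Nat.mul_div_cancel' hdΔ
  have huapos : 0 < ua := by
    rcases Nat.eq_zero_or_pos ua with h | h
    · rw [h, Nat.mul_zero] at haU; omega
    · exact h
  have huaKa : ua ≤ Ka := by
    refine Nat.le_of_mul_le_mul_left ?_ hapos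
    omega
  clear ha hua hKa hΔa hN hgpos hdK hdU hdΔ
  -- The difference of the two `y` vectors.
  set Y : ZMod Ka → F := fun s => ySym K Ka a ua x s - ySym K Ka a ua x' s with hYdef
  -- `Σ_r Y r * L r j = 0` for every column `j`.
  have hzero : ∀ j : Fin N, (∑ r : ZMod Ka, Y r * L r j) = 0 := by
    intro j
    have hc := congrFun hcode j
    simp only [Finset.sum_apply, Pi.smul_apply, smul_eq_mul] at hc
    simp only [hYdef, sub_mul, Finset.sum_sub_distrib, hc, sub_self]
  -- The decoding equations coming from the AIR property.
  have hkey : ∀ s : ZMod Ka, ∃ b : Fin Δa → F,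
      Y s + ∑ t : Fin Δa, b t * Y (s + ((t.1 + 1 : ℕ) : ZMod Ka)) = 0 := by
    intro s
    obtain ⟨w, b, hw⟩ := hAIR s
    refine ⟨b, ?_⟩
    have hsingle : ∀ c : ZMod Ka,
        ∑ r : ZMod Ka, Y r * (Pi.single c 1 : ZMod Ka → F) r = Y c := by
      intro c
      simp [Pi.single_apply, mul_ite, Finset.sum_ite_eq']
    have h0 : ∑ r : ZMod Ka, Y r * L.mulVec w r = 0 := by
      simp only [Matrix.mulVec, dotProduct, Finset.mul_sum]
      rw [Finset.sum_comm]
      refine Finset.sum_eq_zero fun j _ => ?_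
      simp only [← mul_assoc, ← Finset.sum_mul, hzero, zero_mul]
    rw [hw] at h0
    calc Y s + ∑ t : Fin Δa, b t * Y (s + ((t.1 + 1 : ℕ) : ZMod Ka))
        = ∑ r : ZMod Ka, Y r * ((Pi.single s 1 : ZMod Ka → F) +
            ∑ t : Fin Δa, b t • (Pi.single (s + ((t.1 + 1 : ℕ) : ZMod Ka)) 1 : ZMod Ka → F)) r := by
          simp only [Pi.add_apply, mul_add, Finset.sum_add_distrib, hsingle]
          simp only [Finset.sum_apply, Pi.smul_apply, smul_eq_mul, Finset.mul_sum]
          congr 1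
          rw [Finset.sum_comm]
          refine Finset.sum_congr rfl fun t _ => ?_
          simp [Pi.single_apply, mul_ite, Finset.sum_ite_eq', mul_comm]
        _ = 0 := h0
  -- Cast helper lemmas.
  have hsubcast : ∀ n m : ℕ, m ≤ n →
      ((n : ZMod Ka)) - ((m : ZMod Ka)) = (((n - m : ℕ)) : ZMod Ka) := by
    intro n m h
    rw [sub_eq_iff_eq_add, ← Nat.cast_add]
    exact congrArg _ (by omega)
  have hiota : ∀ n : ℕ, iotaMap K Ka a ((n : ℕ) : ZMod Ka) = ((a * n : ℕ) : ZMod K) := by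
    intro n
    unfold iotaMap
    rw [ZMod.val_natCast]
    have : a * (n % Ka) ≡ a * n [MOD K] := by
      rw [← haK]; exact (Nat.mod_modEq n Ka).mul_left' a
    exact (ZMod.natCast_eq_natCast_iff _ _ _).mpr this
  -- Decomposition of `k`.
  obtain ⟨q0, j₀, hj₀, hkeq⟩ : ∃ q0 j₀ : ℕ, j₀ < a ∧ a * q0 + j₀ = k.val :=
    ⟨k.val / a, k.val % a, Nat.mod_lt _ hapos, Nat.div_add_mod k.val a⟩
  have hkcast : ((k.val : ℕ) : ZMod K) = k := ZMod.natCast_rightInverse k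
  -- Evaluation of `Y` on the relevant rows.
  have hYt : ∀ (i : Fin ua) (t : ℕ), t ≤ Δa →
      Y (((q0 + i.1 + t + Ka : ℕ) : ZMod Ka)) =
        if h : i.1 + t < ua then x k ⟨i.1 + t, h⟩ - x' k ⟨i.1 + t, h⟩ else 0 := by
    intro i t ht
    have hYsum : Y (((q0 + i.1 + t + Ka : ℕ) : ZMod Ka))
        = ∑ i' : Fin ua, ∑ j : Fin a,
            (x (((a * (q0 + i.1 + t + Ka - i'.1) + j.1 : ℕ) : ZMod K)) i'
              - x' (((a * (q0 + i.1 + t + Ka - i'.1) + j.1 : ℕ) : ZMod K)) i') := by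
      simp only [hYdef, ySym, ← Finset.sum_sub_distrib]
      refine Finset.sum_congr rfl fun i' _ => Finset.sum_congr rfl fun j _ => ?_
      have hi' : (i'.1 : ℕ) ≤ q0 + i.1 + t + Ka :=
        le_trans (le_of_lt (lt_of_lt_of_le i'.2 huaKa)) (Nat.le_add_left Ka _)
      rw [hsubcast (q0 + i.1 + t + Ka) i'.1 hi', hiota, ← Nat.cast_add]
    rw [hYsum]
    -- value of a single term
    have hsplit : ∀ i' : Fin ua,
        a * (q0 + i.1 + t + Ka - i'.1) + a * i'.1 = a * q0 + a * i.1 + a * t + K := by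
      intro i'
      have h5 : (q0 + i.1 + t + Ka - i'.1) + i'.1 = q0 + i.1 + t + Ka := by
        have := i'.2; omega
      have := congrArg (a * ·) h5
      simp only [Nat.mul_add] at this
      simpa [Nat.mul_add, haK] using this
    have hb1 : a * i.1 + a ≤ U + 1 := by
      have h6 : a * (i.1 + 1) ≤ a * ua := Nat.mul_le_mul_left a i.2
      rw [Nat.mul_add, Nat.mul_one] at h6; omega
    have hb3 : a * t ≤ D - U := haΔ ▸ Nat.mul_le_mul_left a ht
    have hzterm : ∀ (i' : Fin ua) (j : Fin a), ¬(i'.1 = i.1 + t ∧ j.1 = j₀) →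
        x (((a * (q0 + i.1 + t + Ka - i'.1) + j.1 : ℕ) : ZMod K)) i'
          = x' (((a * (q0 + i.1 + t + Ka - i'.1) + j.1 : ℕ) : ZMod K)) i' := by
      intro i' j hne
      have hb2 : a * i'.1 + a ≤ U + 1 := by
        have h6 : a * (i'.1 + 1) ≤ a * ua := Nat.mul_le_mul_left a i'.2
        rw [Nat.mul_add, Nat.mul_one] at h6; omega
      have hsp := hsplit i'
      rcases lt_trichotomy (a * i.1 + a * t + j.1) (a * i'.1 + j₀) with hlt | heq | hgt
      · -- index lies in the backward side information
        set d := (a * i'.1 + j₀) - (a * i.1 + a * t + j.1) with hddef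
        have hd1 : 1 ≤ d := by omega
        have hdU' : d ≤ U := by omega
        have hMk : ((a * (q0 + i.1 + t + Ka - i'.1) + j.1 : ℕ) : ZMod K)
            = k - ((d : ℕ) : ZMod K) := by
          have hnat : (a * (q0 + i.1 + t + Ka - i'.1) + j.1) + d = k.val + K := by omega
          have hc := congrArg (Nat.cast : ℕ → ZMod K) hnat
          push_cast at hc
          rw [ZMod.natCast_self, add_zero] at hc
          rw [eq_sub_iff_add_eq]
          rw [hkcast] at hc
          exact_mod_cast hc
        rw [hMk, hback d hd1 hdU']
      · -- impossible: this is the special term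
        have heq' : a * (i.1 + t) + j.1 = a * i'.1 + j₀ := by rw [Nat.mul_add]; omega
        obtain ⟨h1, h2⟩ := div_unique_aux a (i.1 + t) i'.1 j.1 j₀ j.2 hj₀ heq'
        exact absurd ⟨h1.symm, h2⟩ hne
      · -- index lies in the forward side information
        have h7 : a * i.1 + a * t + j.1 ≤ D := by
          have h8 := j.2
          omega
        obtain ⟨d, hd1, hdD, hd⟩ : ∃ d : ℕ, 1 ≤ d ∧ d ≤ D ∧
            a * i.1 + a * t + j.1 = (a * i'.1 + j₀) + d :=
          ⟨(a * i.1 + a * t + j.1) - (a * i'.1 + j₀), by omega, by omega, by omega⟩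
        have hMk : ((a * (q0 + i.1 + t + Ka - i'.1) + j.1 : ℕ) : ZMod K)
            = k + ((d : ℕ) : ZMod K) := by
          have hnat : a * (q0 + i.1 + t + Ka - i'.1) + j.1 = (k.val + d) + K := by omega
          have hc := congrArg (Nat.cast : ℕ → ZMod K) hnat
          push_cast at hc
          rw [ZMod.natCast_self, add_zero] at hc
          rw [hkcast] at hc
          exact_mod_cast hc
        rw [hMk, hfwd d hd1 hdD]
    have hspec : ∀ (i' : Fin ua) (j : Fin a), i'.1 = i.1 + t → j.1 = j₀ →
        ((a * (q0 + i.1 + t + Ka - i'.1) + j.1 : ℕ) : ZMod K) = k := by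
      intro i' j h1 h2
      have hsp := hsplit i'
      have h9 : a * i'.1 = a * i.1 + a * t := by rw [h1, Nat.mul_add]
      have hnat : a * (q0 + i.1 + t + Ka - i'.1) + j.1 = k.val + K := by omega
      have hc := congrArg (Nat.cast : ℕ → ZMod K) hnat
      push_cast at hc
      rw [ZMod.natCast_self, add_zero] at hc
      rw [hkcast] at hc
      exact_mod_cast hc
    by_cases h : i.1 + t < ua
    · rw [dif_pos h]
      rw [Finset.sum_eq_single (⟨i.1 + t, h⟩ : Fin ua)]
      · rw [Finset.sum_eq_single (⟨j₀, hj₀⟩ : Fin a)]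
        · rw [hspec ⟨i.1 + t, h⟩ ⟨j₀, hj₀⟩ rfl rfl]
        · intro j _ hj
          rw [hzterm _ j (by
            rintro ⟨-, h2⟩
            exact hj (Fin.ext h2)), sub_self]
        · intro hmem; exact absurd (Finset.mem_univ _) hmem
      · intro i' _ hi'
        refine Finset.sum_eq_zero fun j _ => ?_
        rw [hzterm i' j (by
          rintro ⟨h1, -⟩
          exact hi' (Fin.ext h1)), sub_self]
      · intro hmem; exact absurd (Finset.mem_univ _) hmem
    · rw [dif_neg h]
      refine Finset.sum_eq_zero fun i' _ => Finset.sum_eq_zero fun j _ => ?_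
      rw [hzterm i' j (by
        rintro ⟨h1, -⟩
        have := i'.2; omega), sub_self]
  -- Downward induction on the component index.
  have main : ∀ m : ℕ, ∀ i : Fin ua, ua - i.1 = m → x k i = x' k i := by
    intro m
    induction m using Nat.strong_induction_on with
    | _ m ih =>
      intro i him
      have hsmall : ∀ i' : Fin ua, i.1 < i'.1 → x k i' = x' k i' := by
        intro i' h'
        exact ih (ua - i'.1) (by omega) i' rfl
      obtain ⟨b, hb⟩ := hkey (((q0 + i.1 + Ka : ℕ) : ZMod Ka))
      have h00 : Y (((q0 + i.1 + Ka : ℕ) : ZMod Ka)) = x k i - x' k i := by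
        have := hYt i 0 (Nat.zero_le _)
        simp only [Nat.add_zero] at this
        rw [this, dif_pos i.2]
      have hrest : ∀ t : Fin Δa,
          b t * Y ((((q0 + i.1 + Ka : ℕ) : ZMod Ka)) + ((t.1 + 1 : ℕ) : ZMod Ka)) = 0 := by
        intro t
        have hcast : (((q0 + i.1 + Ka : ℕ) : ZMod Ka)) + ((t.1 + 1 : ℕ) : ZMod Ka)
            = (((q0 + i.1 + (t.1 + 1) + Ka : ℕ) : ZMod Ka)) := by
          push_cast; ring
        rw [hcast, hYt i (t.1 + 1) (by have := t.2; omega)]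
        by_cases h : i.1 + (t.1 + 1) < ua
        · rw [dif_pos h, hsmall ⟨i.1 + (t.1 + 1), h⟩ (by simp), sub_self, mul_zero]
        · rw [dif_neg h, mul_zero]
      rw [h00, Finset.sum_congr rfl (fun t _ => hrest t), Finset.sum_const_zero, add_zero,
        sub_eq_zero] at hb
      exact hb
  funext i
  exact main (ua - i.1) i rfl
end

section
/- Let F be a field and let K, D, U be integers with 0 ≤ U ≤ D and U + D ≤ K − 2. Set a = gcd(K, D−U, U+1), u_a = (U+1)/a, K_a = K/a, Δ_a = (D−U)/a, N = K_a − Δ_a. Let L be a K_a × N matrix over F with rows L_s indexed by s ∈ ℤ/K_aℤ such that for every s ∈ ℤ/K_aℤ there exist w ∈ F^N and scalars b_1,…,b_{Δ_a} ∈ F with L·w = e_s + Σ_{t=1}^{Δ_a} b_t·e_{s+t}. For a message assignment x define the extended message symbols z_{s,i}(x) = Σ_{j=0}^{a−1} x_{ι(s)+j, i} for s ∈ ℤ/K_aℤ, i ∈ {1,…,u_a}. Then every receiver can recover its whole extended message vector: for all x, x' : ℤ/Kℤ → F^{u_a}, every s ∈ ℤ/K_aℤ and every k of the form k = ι(s)+r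 with r ∈ {0,…,a−1}, if Σ_t y_t(x)·L_t = Σ_t y_t(x')·L_t and x_m = x'_m for every m ∈ 𝒦_k, then z_{s,i}(x) = z_{s,i}(x') for every i ∈ {1,…,u_a}. -/
/-- Extended message symbol `z_{s,i}(x) = Σ_{j=0}^{a−1} x_{ι(s)+j, i}`
(`i : Fin ua` stands for `i+1 ∈ {1,…,u_a}`). -/
def zSym {F : Type*} [Field F] (K Ka a ua : ℕ) (x : ZMod K → Fin ua → F)
    (s : ZMod Ka) (i : Fin ua) : F :=
  ∑ j : Fin a, x (iotaMap K Ka a s + (j.1 : ZMod K)) i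


/-!
Put `d = x - x'`. Since `y` and `z` are linear, `y(d)` lies in the left kernel of `L`, and `d`
vanishes at `k - U, …, k - 1, k + 1, …, k + D`. For `-(u_a - 1) ≤ p ≤ u_a + Δ_a - 1` the block
`{ι(s + p) + j : j < a}` summed by `z_{s+p,i}` lies in `[k - U, k + D]` and avoids `k` unless
`p = 0`, so for `0 ≤ m < u_a + Δ_a` the symbol `y_{s+m}(d)` is `d_{k,m+1}` if `m < u_a` and `0`
otherwise. The AIR property expresses `y_{s+m}` through `y_{s+m+1}, …, y_{s+m+Δ_a}`; as the last
`Δ_a` of `y_s, …, y_{s+u_a+Δ_a-1}` vanish, a downward induction kills all of them. Hence `d_k = 0`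
and `z_s(d) = d_k = 0`.
-/

open Matrix

theorem forall_add_intCast_of_forall_sub_of_forall_add {R : Type*} [Ring R] {P : R → Prop}
    {k : R} {U D : ℕ} (hback : ∀ d : ℕ, 1 ≤ d → d ≤ U → P (k - d))
    (hfwd : ∀ d : ℕ, 1 ≤ d → d ≤ D → P (k + d)) :
    ∀ e : ℤ, e ≠ 0 → -(U : ℤ) ≤ e → e ≤ D → P (k + e) := by
  intro e he hlo hhi
  obtain ⟨n, rfl | rfl⟩ := Int.eq_nat_or_neg e
  · simpa using hfwd n (by omega) (by omega)
  · simpa [← sub_eq_add_neg] using hback n (by omega) (by omega)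

theorem eq_zero_of_forall_add_sum_mul_eq_zero {R : Type*} [NonUnitalNonAssocSemiring R]
    {f : ℕ → R} {n Δ : ℕ} (htail : ∀ m, n ≤ m → m < n + Δ → f m = 0)
    (hrec : ∀ i < n, ∃ b : Fin Δ → R, f i + ∑ t : Fin Δ, b t * f (i + t + 1) = 0) :
    ∀ i < n, f i = 0 := by
  intro i hi
  induction h : n - i using Nat.strong_induction_on generalizing i with
  | _ j ih =>
    obtain ⟨b, hb⟩ := hrec i hi
    have hnext : ∀ t : Fin Δ, f (i + t + 1) = 0 := fun t =>
      if hlt : i + t + 1 < n then ih (n - (i + t + 1)) (by omega) _ hlt rfl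
      else htail _ (by omega) (by omega)
    simpa [hnext] using hb

theorem add_sum_mul_eq_zero_of_vecMul_eq_zero {m n ι R : Type*} [Fintype m] [DecidableEq m]
    [Fintype n] [Fintype ι] [CommSemiring R] {L : Matrix m n R} {Y : m → R} (hY : Y ᵥ* L = 0)
    {w : n → R} {s : m} {b : ι → R} {σ : ι → m}
    (hw : L *ᵥ w = Pi.single s 1 + ∑ t, b t • Pi.single (σ t) 1) :
    Y s + ∑ t, b t * Y (σ t) = 0 := by
  have h : Y ⬝ᵥ (L *ᵥ w) = 0 := by rw [dotProduct_mulVec, hY, zero_dotProduct]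
  simpa [hw, dotProduct_add, dotProduct_sum, dotProduct_smul, dotProduct_single, mul_comm]
    using h

theorem apply_add_natCast_eq_zero_of_vecMul_eq_zero {R : Type*} [CommSemiring R] {n N Δ : ℕ}
    [NeZero n] {L : Matrix (ZMod n) (Fin N) R}
    (hL : ∀ s : ZMod n, ∃ (w : Fin N → R) (b : Fin Δ → R),
      L *ᵥ w = Pi.single s 1 + ∑ t : Fin Δ, b t • Pi.single (s + ((t.1 + 1 : ℕ) : ZMod n)) 1)
    {Y : ZMod n → R} (hY : Y ᵥ* L = 0) {s : ZMod n} {l : ℕ}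
    (htail : ∀ m, l ≤ m → m < l + Δ → Y (s + m) = 0) :
    ∀ i < l, Y (s + i) = 0 :=
  eq_zero_of_forall_add_sum_mul_eq_zero (f := fun m => Y (s + m)) htail fun i _ => by
    obtain ⟨w, b, hw⟩ := hL (s + i)
    exact ⟨b, by simpa [add_assoc] using add_sum_mul_eq_zero_of_vecMul_eq_zero hY hw⟩

section Blocks

variable {F : Type*} [Field F] {K Ka a ua : ℕ}

theorem iotaMap_intCast [NeZero Ka] (haK : a * Ka = K) (p : ℤ) :
    iotaMap K Ka a (p : ZMod Ka) = ((a * p : ℤ) : ZMod K) := by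
  have hsplit : (a * p : ℤ) = a * (p % Ka) + K * (p / Ka) := by
    rw [← haK, Nat.cast_mul, mul_assoc, ← mul_add, Int.emod_add_mul_ediv]
  rw [iotaMap, hsplit, ← ZMod.val_intCast]
  push_cast
  simp

theorem iotaMap_add_intCast [NeZero Ka] (haK : a * Ka = K) (t : ZMod Ka) (p : ℤ) :
    iotaMap K Ka a (t + p) = iotaMap K Ka a t + ((a * p : ℤ) : ZMod K) := by
  rw [← ZMod.natCast_zmod_val t, ← Int.cast_natCast, ← Int.cast_add, iotaMap_intCast haK,
    iotaMap_intCast haK]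
  push_cast; ring

theorem ySym_eq_sum_zSym (x : ZMod K → Fin ua → F) (t : ZMod Ka) :
    ySym K Ka a ua x t = ∑ i : Fin ua, zSym K Ka a ua x (t - i) i := rfl

theorem ySym_sub (x x' : ZMod K → Fin ua → F) (t : ZMod Ka) :
    ySym K Ka a ua (x - x') t = ySym K Ka a ua x t - ySym K Ka a ua x' t := by
  simp only [ySym, Pi.sub_apply, Finset.sum_sub_distrib]

theorem zSym_sub (x x' : ZMod K → Fin ua → F) (s : ZMod Ka) (i : Fin ua) :
    zSym K Ka a ua (x - x') s i = zSym K Ka a ua x s i - zSym K Ka a ua x' s i := by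
  simp only [zSym, Pi.sub_apply, Finset.sum_sub_distrib]

variable [NeZero Ka] {d : ZMod K → Fin ua → F} {k : ZMod K} {s : ZMod Ka} {r : ℕ}

theorem zSym_add_intCast (haK : a * Ka = K) (hk : k = iotaMap K Ka a s + r) (p : ℤ)
    (i : Fin ua) :
    zSym K Ka a ua d (s + p) i = ∑ j : Fin a, d (k + ((a * p + j - r : ℤ) : ZMod K)) i := by
  refine Finset.sum_congr rfl fun j _ => ?_
  rw [iotaMap_add_intCast haK, hk]
  push_cast; ring_nf

theorem zSym_add_intCast_eq {U D : ℕ} (haK : a * Ka = K)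
    (hd : ∀ e : ℤ, e ≠ 0 → -(U : ℤ) ≤ e → e ≤ D → d (k + e) = 0)
    (hk : k = iotaMap K Ka a s + r) (hr : r < a) {p : ℤ} (hlo : -(U : ℤ) ≤ a * p - r)
    (hhi : a * p + a - 1 - r ≤ (D : ℤ)) (i : Fin ua) :
    zSym K Ka a ua d (s + p) i = if p = 0 then d k i else 0 := by
  rw [zSym_add_intCast haK hk]
  split_ifs with hp
  · subst hp
    rw [Finset.sum_eq_single ⟨r, hr⟩ (fun j _ hj => ?_) (by simp)]
    · simp
    · have hjr : (j : ℕ) ≠ r := fun h => hj (Fin.ext h)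
      have := j.isLt
      exact congrFun (hd _ (by omega) (by omega) (by omega)) i
  · refine Finset.sum_eq_zero fun j _ => congrFun (hd _ ?_ ?_ ?_) i
    · have := j.isLt
      rcases lt_or_gt_of_ne hp with hp | hp <;> nlinarith
    · omega
    · have := j.isLt
      omega

theorem ySym_add_natCast_eq {U D : ℕ} (haK : a * Ka = K) (haU : a * ua = U + 1)
    (hd : ∀ e : ℤ, e ≠ 0 → -(U : ℤ) ≤ e → e ≤ D → d (k + e) = 0)
    (hk : k = iotaMap K Ka a s + r) (hr : r < a) {m : ℕ} (hm : a * (m + 1) ≤ D + 1) :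
    ySym K Ka a ua d (s + m) = if h : m < ua then d k ⟨m, h⟩ else 0 := by
  have hblock : ∀ i : Fin ua,
      zSym K Ka a ua d (s + m - (i : ℕ)) i = if (i : ℕ) = m then d k i else 0 := by
    intro i
    have hcast : s + (m : ZMod Ka) - (i : ℕ) = s + (((m : ℤ) - i : ℤ) : ZMod Ka) := by
      push_cast; ring
    have hi : a * (i + 1) ≤ a * ua := Nat.mul_le_mul_left _ i.isLt
    zify at haU hi hm
    rw [hcast, zSym_add_intCast_eq haK hd hk hr (by nlinarith) (by nlinarith)]
    exact if_congr (by omega) rfl rfl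
  rw [ySym_eq_sum_zSym]
  simp_rw [hblock]
  split_ifs with h
  · rw [Finset.sum_eq_single ⟨m, h⟩ (fun i _ hi => if_neg fun e => hi (Fin.ext e)) (by simp)]
    simp
  · exact Finset.sum_eq_zero fun i _ => if_neg (by omega)

end Blocks

theorem suicp_sncs_extended_message_decodable_general
    (F : Type*) [Field F] (K D U : ℕ) (hUD : U ≤ D)
    (a ua Ka Δa N : ℕ)
    (ha : a = Nat.gcd K (Nat.gcd (D - U) (U + 1)))
    (hua : ua = (U + 1) / a) (hKa : Ka = K / a) (hΔa : Δa = (D - U) / a)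
    [NeZero Ka]
    (L : Matrix (ZMod Ka) (Fin N) F)
    (hAIR : ∀ s : ZMod Ka, ∃ (w : Fin N → F) (b : Fin Δa → F),
      L.mulVec w =
        (Pi.single s 1 : ZMod Ka → F) +
          ∑ t : Fin Δa,
            b t • (Pi.single (s + ((t.1 + 1 : ℕ) : ZMod Ka)) 1 : ZMod Ka → F))
    (x x' : ZMod K → Fin ua → F) (s : ZMod Ka) (r : ℕ) (hr : r < a) (k : ZMod K)
    (hk : k = iotaMap K Ka a s + (r : ZMod K))
    (hcode : ∑ t : ZMod Ka, ySym K Ka a ua x t • L t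
           = ∑ t : ZMod Ka, ySym K Ka a ua x' t • L t)
    (hback : ∀ d : ℕ, 1 ≤ d → d ≤ U → x (k - (d : ZMod K)) = x' (k - (d : ZMod K)))
    (hfwd : ∀ d : ℕ, 1 ≤ d → d ≤ D → x (k + (d : ZMod K)) = x' (k + (d : ZMod K))) :
    ∀ i : Fin ua, zSym K Ka a ua x s i = zSym K Ka a ua x' s i := by
  have haK : a * Ka = K := hKa ▸ Nat.mul_div_cancel' (ha ▸ Nat.gcd_dvd_left _ _)
  have haU : a * ua = U + 1 :=
    hua ▸ Nat.mul_div_cancel' (ha ▸ (Nat.gcd_dvd_right _ _).trans (Nat.gcd_dvd_right _ _))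
  have haΔ : a * Δa = D - U :=
    hΔa ▸ Nat.mul_div_cancel' (ha ▸ (Nat.gcd_dvd_right _ _).trans (Nat.gcd_dvd_left _ _))
  have hd : ∀ e : ℤ, e ≠ 0 → -(U : ℤ) ≤ e → e ≤ D → (x - x') (k + e) = 0 :=
    forall_add_intCast_of_forall_sub_of_forall_add (P := fun m => (x - x') m = 0)
      (fun n h1 h2 => sub_eq_zero.mpr (hback n h1 h2))
      (fun n h1 h2 => sub_eq_zero.mpr (hfwd n h1 h2))
  have hker : ySym K Ka a ua (x - x') ᵥ* L = 0 := by
    simp only [vecMul_eq_sum, ySym_sub, sub_smul, Finset.sum_sub_distrib, hcode, sub_self]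
  have hY : ∀ m < ua + Δa, ySym K Ka a ua (x - x') (s + m) =
      if h : m < ua then (x - x') k ⟨m, h⟩ else 0 := fun m hm =>
    ySym_add_natCast_eq haK haU hd hk hr (by
      have := Nat.mul_le_mul_left a (show m + 1 ≤ ua + Δa by omega)
      rw [Nat.mul_add a ua Δa, haU, haΔ] at this
      omega)
  have hvanish : ∀ i < ua, ySym K Ka a ua (x - x') (s + i) = 0 :=
    apply_add_natCast_eq_zero_of_vecMul_eq_zero hAIR hker fun m h1 h2 => by
      rw [hY m h2, dif_neg (by omega)]
  have ha_le : a ≤ U + 1 := Nat.le_of_dvd U.succ_pos ⟨ua, haU.symm⟩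
  intro i
  have hzs : zSym K Ka a ua (x - x') s i = (x - x') k i := by
    simpa using zSym_add_intCast_eq haK hd hk hr (p := 0) (by omega) (by omega) i
  have hdk : (x - x') k i = 0 := by simpa [hY i (by omega)] using hvanish i i.isLt
  rw [← sub_eq_zero, ← zSym_sub, hzs, hdk]

/-- Every receiver `R_k` with `k = ι(s) + r`, `r ∈ {0,…,a−1}`, can recover its whole
extended message vector `(z_{s,1},…,z_{s,u_a})` from the codeword
`Σ_t y_t(x)·L_t` and its side-information `𝒦_k`. -/
theorem suicp_sncs_extended_message_decodable
    (F : Type*) [Field F] (K D U : ℕ) (hUD : U ≤ D) (hK : U + D + 2 ≤ K)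
    (a ua Ka Δa N : ℕ)
    (ha : a = Nat.gcd K (Nat.gcd (D - U) (U + 1)))
    (hua : ua = (U + 1) / a) (hKa : Ka = K / a) (hΔa : Δa = (D - U) / a)
    (hN : N = Ka - Δa)
    [NeZero K] [NeZero Ka]
    (L : Matrix (ZMod Ka) (Fin N) F)
    (hAIR : ∀ s : ZMod Ka, ∃ (w : Fin N → F) (b : Fin Δa → F),
      L.mulVec w =
        (Pi.single s 1 : ZMod Ka → F) +
          ∑ t : Fin Δa,
            b t • (Pi.single (s + ((t.1 + 1 : ℕ) : ZMod Ka)) 1 : ZMod Ka → F))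
    (x x' : ZMod K → Fin ua → F) (s : ZMod Ka) (r : ℕ) (hr : r < a) (k : ZMod K)
    (hk : k = iotaMap K Ka a s + (r : ZMod K))
    (hcode : ∑ t : ZMod Ka, ySym K Ka a ua x t • L t
           = ∑ t : ZMod Ka, ySym K Ka a ua x' t • L t)
    (hback : ∀ d : ℕ, 1 ≤ d → d ≤ U → x (k - (d : ZMod K)) = x' (k - (d : ZMod K)))
    (hfwd : ∀ d : ℕ, 1 ≤ d → d ≤ D → x (k + (d : ZMod K)) = x' (k + (d : ZMod K))) :
    ∀ i : Fin ua, zSym K Ka a ua x s i = zSym K Ka a ua x' s i :=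
  suicp_sncs_extended_message_decodable_general F K D U hUD a ua Ka Δa N ha hua hKa hΔa L hAIR x x'
    s r hr k hk hcode hback hfwd
end

section
/- (Observation 2.) Let a, u, Δ, U, D be integers with a, u, Δ ≥ 1, a·u = U+1, a·Δ = D−U and U ≤ D. Let s, r, p, i, j be integers with 0 ≤ r ≤ a−1, 1 ≤ p ≤ Δ, 1 ≤ i ≤ u, 0 ≤ j ≤ a−1, and set k = a·s + r and m = a(s+p+1−i) + j. If m does not lie in the block {a·s, a·s+1, …, a·s+a−1}, then either −U ≤ m − k ≤ −1 or 1 ≤ m − k ≤ D. Consequently, every message symbol appearing in y_{s+1}, …, y_{s+Δ} that does not belong to the extended message vector z_s lies in the side-information 𝒦_k of receiver R_k. -/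
/-- Observation 2: with `k = a·s + r` (`0 ≤ r ≤ a−1`) and `m = a(s+p+1−i)+j`
(`1 ≤ p ≤ Δ`, `1 ≤ i ≤ u`, `0 ≤ j ≤ a−1`, `a·u = U+1`, `a·Δ = D−U`, `U ≤ D`),
if `m` does not lie in the block `{a·s,…,a·s+a−1}`, then
`−U ≤ m−k ≤ −1` or `1 ≤ m−k ≤ D`; i.e. every message symbol appearing in
`y_{s+1},…,y_{s+Δ}` not belonging to `z_s` is side-information of `R_k`. -/
theorem observation_two (a u Δ U D : ℤ) (ha : 1 ≤ a) (hu : 1 ≤ u) (hΔ : 1 ≤ Δ)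
    (hau : a * u = U + 1) (haΔ : a * Δ = D - U) (hUD : U ≤ D)
    (s r p i j k m : ℤ)
    (hr0 : 0 ≤ r) (hr : r ≤ a - 1) (hp1 : 1 ≤ p) (hp : p ≤ Δ)
    (hi1 : 1 ≤ i) (hi : i ≤ u) (hj0 : 0 ≤ j) (hj : j ≤ a - 1)
    (hk : k = a * s + r) (hm : m = a * (s + p + 1 - i) + j)
    (hblock : ¬ (a * s ≤ m ∧ m ≤ a * s + a - 1)) :
    (-U ≤ m - k ∧ m - k ≤ -1) ∨ (1 ≤ m - k ∧ m - k ≤ D) := by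
  set q : ℤ := p + 1 - i with hq
  have hm' : m = a * s + a * q + j := by rw [hm]; ring
  have hqne : q ≠ 0 := by
    intro h0
    exact hblock ⟨by simp [hm', h0]; linarith, by simp [hm', h0]; linarith⟩
  have hqub : q ≤ Δ := by omega
  have hqlb : 2 - u ≤ q := by omega
  rcases lt_or_gt_of_ne hqne with hneg | hpos
  · left
    have h1 : q ≤ -1 := by omega
    constructor
    · -- m - k = a*q + j - r ≥ a*(2-u) - (a-1) = a - U ≥ -U
      have : a * (2 - u) ≤ a * q := by
        apply mul_le_mul_of_nonneg_left hqlb (by linarith)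
      nlinarith
    · have : a * q ≤ a * (-1) := by
        apply mul_le_mul_of_nonneg_left h1 (by linarith)
      nlinarith
  · right
    have h1 : 1 ≤ q := by omega
    constructor
    · have : a * 1 ≤ a * q := by
        apply mul_le_mul_of_nonneg_left h1 (by linarith)
      nlinarith
    · have : a * q ≤ a * Δ := by
        apply mul_le_mul_of_nonneg_left hqub (by linarith)
      nlinarith
end
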